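/- Formal power series core of the main theorem (Theorem 2.5): Let C_x, C_y, M₁, M₂, M_xy be formal power series over ℂ such that: C_x has zero constant and linear coefficients and nonzero quadratic coefficient; C_y has zero constant term and nonzero linear coefficient; M₁ has nonzero constant term; M₂ has zero constant term; M_xy − 1 has zero constant and linear coefficients and nonzero quadratic coefficient; and the combinatorial relations hold: M_xy = 1 + C_y∘(X·M₂), X·M₁·M₂ = (C_y∘(X·M₂))·M_xy, and X·M₁·M₂ = (C_x∘(X·M₁))·M_xy. Let χ be a formal power series with zero constant term satisfying (M_xy − 1)∘χ = X² (a √z-inverse of the moment series of the product), and let σ_y be the unique power series with zero constant term satisfying C_y∘σ_y = X (so σ_y(z) = z·S_y(z)). Then there exists a formal power series σ_x with zero constant term satisfying C_x∘σ_x = X² (so σ_x encodes z·S_x(z) at z = X²) such that X²·(1+X²)·χ(X) = σ_x(X)·σ_y(X²). (This identity is exactly S_xy(z) = S_x(z)·S_y(z) for the two S-transforms of xy.) -/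

import Mathlib

/-!
Relations (2) and (3), after cancelling `M_xy` (whose constant term is 1 by (1)), say that
`C_x ∘ (z M₁) = C_y ∘ (z M₂) = M_xy - 1`. Composing on the right with `χ`, the series
`σ_x := (z M₁) ∘ χ` and `v := (z M₂) ∘ χ` satisfy `C_x ∘ σ_x = C_y ∘ v = X²`. Since `C_y` has a
compositional inverse, `C_y ∘ v = C_y ∘ (σ_y ∘ X²)` forces `v = σ_y ∘ X²`. Finally
`(z M₁)(z M₂) = z (M_xy - 1) M_xy` by (1) and (2), and composing this identity with `χ` gives
`σ_x · σ_y(X²) = χ · X² (1 + X²)`.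
-/

open PowerSeries

/-- Formal composition `F ∘ G` of power series over `ℂ`, intended for the case where
`G` has zero constant term (so that only finitely many terms contribute to each
coefficient). -/
noncomputable def comp (F G : PowerSeries ℂ) : PowerSeries ℂ :=
  PowerSeries.mk fun n =>
    PowerSeries.coeff n
      (∑ k ∈ Finset.range (n + 1), PowerSeries.C (PowerSeries.coeff k F) * G ^ k)

namespace PowerSeries

variable {R : Type*} [CommRing R]

theorem eq_of_subst_eq_subst {P v w : R⟦X⟧} (hP : constantCoeff P = 0)
    (hP' : IsUnit (coeff 1 P)) (hv : HasSubst v) (hw : HasSubst w)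
    (h : P.subst v = P.subst w) : v = w := by
  have hQP : (P.substInvOfIsUnit hP').subst P = X := subst_substInvOfIsUnit_left P hP hP'
  have hPsubst : HasSubst P := HasSubst.of_constantCoeff_zero' hP
  calc v = (P.substInvOfIsUnit hP').subst (P.subst v) := by
        rw [← subst_comp_subst_apply hPsubst hv, hQP, subst_X hv]
    _ = (P.substInvOfIsUnit hP').subst (P.subst w) := by rw [h]
    _ = w := by rw [← subst_comp_subst_apply hPsubst hw, hQP, subst_X hw]

end PowerSeries

section comp

variable {F G H : ℂ⟦X⟧}

theorem constantCoeff_comp : constantCoeff (comp F H) = constantCoeff F := by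
  rw [← coeff_zero_eq_constantCoeff_apply, ← coeff_zero_eq_constantCoeff_apply]
  simp [comp, coeff_C_mul]

theorem comp_eq_subst (hH : constantCoeff H = 0) : comp F H = F.subst H := by
  ext n
  rw [coeff_subst' (HasSubst.of_constantCoeff_zero' hH),
    finsum_eq_sum_of_support_subset (s := Finset.range (n + 1))]
  · simp [comp, coeff_C_mul]
  · intro k hk
    by_contra hkn
    simp only [Finset.coe_range, Set.mem_Iio, not_lt] at hkn
    have hnk : (n : ℕ∞) < (H ^ k).order :=
      (Nat.cast_lt.2 hkn).trans_le (le_order_pow_of_constantCoeff_eq_zero k hH)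
    exact hk (by simp only [coeff_of_lt_order n hnk, smul_zero])

theorem comp_add (hH : constantCoeff H = 0) : comp (F + G) H = comp F H + comp G H := by
  simp only [comp_eq_subst hH, subst_add (HasSubst.of_constantCoeff_zero' hH)]

theorem comp_mul (hH : constantCoeff H = 0) : comp (F * G) H = comp F H * comp G H := by
  simp only [comp_eq_subst hH, subst_mul (HasSubst.of_constantCoeff_zero' hH)]

theorem comp_X (hH : constantCoeff H = 0) : comp X H = H := by
  rw [comp_eq_subst hH, subst_X (HasSubst.of_constantCoeff_zero' hH)]

theorem comp_comp (hG : constantCoeff G = 0) (hH : constantCoeff H = 0) :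
    comp (comp F G) H = comp F (comp G H) := by
  have hGH : constantCoeff (comp G H) = 0 := by rw [constantCoeff_comp, hG]
  rw [comp_eq_subst hH, comp_eq_subst hG, comp_eq_subst hGH, comp_eq_subst hH,
    subst_comp_subst_apply (HasSubst.of_constantCoeff_zero' hG)
      (HasSubst.of_constantCoeff_zero' hH)]

theorem comp_injective (hF0 : constantCoeff F = 0) (hF1 : coeff 1 F ≠ 0)
    (hG : constantCoeff G = 0) (hH : constantCoeff H = 0) (h : comp F G = comp F H) :
    G = H := by
  rw [comp_eq_subst hG, comp_eq_subst hH] at h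
  exact eq_of_subst_eq_subst hF0 hF1.isUnit (HasSubst.of_constantCoeff_zero' hG)
    (HasSubst.of_constantCoeff_zero' hH) h

end comp

theorem stmt_11_general (Cx Cy M₁ M₂ Mxy χ σy : PowerSeries ℂ)
    (hCy0 : PowerSeries.constantCoeff Cy = 0)
    (hCy1 : PowerSeries.coeff 1 Cy ≠ 0)
    (heq1 : Mxy = 1 + comp Cy (PowerSeries.X * M₂))
    (heq2 : PowerSeries.X * M₁ * M₂ = comp Cy (PowerSeries.X * M₂) * Mxy)
    (heq3 : PowerSeries.X * M₁ * M₂ = comp Cx (PowerSeries.X * M₁) * Mxy)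
    (hχ0 : PowerSeries.constantCoeff χ = 0)
    (hχ : comp (Mxy - 1) χ = PowerSeries.X ^ 2)
    (hσy0 : PowerSeries.constantCoeff σy = 0)
    (hσy : comp Cy σy = PowerSeries.X) :
    ∃ σx : PowerSeries ℂ, PowerSeries.constantCoeff σx = 0 ∧
      comp Cx σx = PowerSeries.X ^ 2 ∧
      PowerSeries.X ^ 2 * (1 + PowerSeries.X ^ 2) * χ
        = σx * comp σy (PowerSeries.X ^ 2) := by
  have hMxy : Mxy ≠ 0 := by
    intro h
    simpa [h, constantCoeff_comp, hCy0] using congrArg constantCoeff heq1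
  have hCyψ : comp Cy (X * M₂) = Mxy - 1 := by rw [heq1]; ring
  have hCxφ : comp Cx (X * M₁) = Mxy - 1 :=
    (mul_right_cancel₀ hMxy (heq3.symm.trans heq2)).trans hCyψ
  have hφψ : X * M₁ * (X * M₂) = X * ((Mxy - 1) + (Mxy - 1) * (Mxy - 1)) := by
    linear_combination (X : ℂ⟦X⟧) * heq2 + X * Mxy * hCyψ
  have hX2 : constantCoeff (X ^ 2 : ℂ⟦X⟧) = 0 := by simp
  have hψχ : comp (X * M₂) χ = comp σy (X ^ 2) := by
    refine comp_injective hCy0 hCy1 (by simp [constantCoeff_comp])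
      (by simp [constantCoeff_comp, hσy0]) ?_
    rw [← comp_comp (by simp) hχ0, hCyψ, hχ, ← comp_comp hσy0 hX2, hσy, comp_X hX2]
  refine ⟨comp (X * M₁) χ, by simp [constantCoeff_comp],
    by rw [← comp_comp (by simp) hχ0, hCxφ, hχ], ?_⟩
  rw [← hψχ, ← comp_mul hχ0, hφψ, comp_mul hχ0, comp_add hχ0, comp_mul hχ0, comp_X hχ0, hχ]
  ring

/-- Formal power series core of the main theorem (Theorem 2.5),
`S_{xy}(z) = S_x(z)·S_y(z)` for `x` with vanishing mean: under the combinatorial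
relations (1)–(3) of the paper between the series `C_x`, `C_y`, `M₁`, `M₂`, `M_{xy}`,
if `χ` is a `√z`-inverse of the moment series `M_{xy} − 1` and `σ_y = z·S_y(z)` is the
inverse of `C_y`, then there is a series `σ_x` with `C_x ∘ σ_x = X²` (encoding
`z·S_x(z)` at `z = X²`) with `X²·(1+X²)·χ(X) = σ_x(X)·σ_y(X²)`. -/
theorem stmt_11 (Cx Cy M₁ M₂ Mxy χ σy : PowerSeries ℂ)
    (hCx0 : PowerSeries.coeff 0 Cx = 0)
    (hCx1 : PowerSeries.coeff 1 Cx = 0)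
    (hCx2 : PowerSeries.coeff 2 Cx ≠ 0)
    (hCy0 : PowerSeries.constantCoeff Cy = 0)
    (hCy1 : PowerSeries.coeff 1 Cy ≠ 0)
    (hM₁ : PowerSeries.constantCoeff M₁ ≠ 0)
    (hM₂ : PowerSeries.constantCoeff M₂ = 0)
    (hMxy0 : PowerSeries.coeff 0 (Mxy - 1) = 0)
    (hMxy1 : PowerSeries.coeff 1 (Mxy - 1) = 0)
    (hMxy2 : PowerSeries.coeff 2 (Mxy - 1) ≠ 0)
    (heq1 : Mxy = 1 + comp Cy (PowerSeries.X * M₂))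
    (heq2 : PowerSeries.X * M₁ * M₂ = comp Cy (PowerSeries.X * M₂) * Mxy)
    (heq3 : PowerSeries.X * M₁ * M₂ = comp Cx (PowerSeries.X * M₁) * Mxy)
    (hχ0 : PowerSeries.constantCoeff χ = 0)
    (hχ : comp (Mxy - 1) χ = PowerSeries.X ^ 2)
    (hσy0 : PowerSeries.constantCoeff σy = 0)
    (hσy : comp Cy σy = PowerSeries.X) :
    ∃ σx : PowerSeries ℂ, PowerSeries.constantCoeff σx = 0 ∧
      comp Cx σx = PowerSeries.X ^ 2 ∧
      PowerSeries.X ^ 2 * (1 + PowerSeries.X ^ 2) * χ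
        = σx * comp σy (PowerSeries.X ^ 2) :=
  stmt_11_general Cx Cy M₁ M₂ Mxy χ σy hCy0 hCy1 heq1 heq2 heq3 hχ0 hχ hσy0 hσy
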